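/- (Γ-liminf for the rescaled dissipation distance on matrices.) Let R be the dissipation function (R = R^dev on deviatoric matrices, ∞ otherwise) and D the induced dissipation distance, and suppose the effective-domain bounds D(P,Q) ≤ c₆ and D(I,P) ≤ c₆|P−I| hold for P,Q ∈ K. Define D_ε(z₁,z₂) := ε⁻¹D(I+εz₁,I+εz₂) and D₀(z₁,z₂) := R(z₂−z₁). Then for every (z,ẑ) ∈ ℝ^{d×d}×ℝ^{d×d} and every sequence (z_ε,ẑ_ε) → (z,ẑ): D₀(z,ẑ) ≤ liminf_{ε→0} D_ε(z_ε,ẑ_ε). -/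

import Mathlib

open MeasureTheory Matrix Filter Set Metric
open scoped BigOperators ENNReal NNReal Topology RealInnerProductSpace

noncomputable section

namespace LinPlast

/-- Euclidean space `ℝ^d`. -/
abbrev E (d : ℕ) := EuclideanSpace ℝ (Fin d)

/-- Square `d×d` real matrices. -/
abbrev Mat (d : ℕ) := Matrix (Fin d) (Fin d) ℝ

attribute [local instance] Matrix.frobeniusNormedAddCommGroup Matrix.frobeniusNormedSpace

variable {d : ℕ}

/-- Frobenius inner product `A : B`. -/
def matInner (A B : Mat d) : ℝ := ∑ i, ∑ j, A i j * B i j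

/-- Fourth order tensors. -/
abbrev Tens (d : ℕ) := Fin d → Fin d → Fin d → Fin d → ℝ

/-- Application of a 4-tensor to a matrix, `(𝕋A)_{ij} = ∑_{kl} 𝕋_{ijkl} A_{kl}`. -/
def tApp (T : Tens d) (A : Mat d) : Mat d := Matrix.of fun i j => ∑ k, ∑ l, T i j k l * A k l

/-- The quadratic form `|A|²_𝕋 := ½ A : 𝕋A`. -/
def qForm (T : Tens d) (A : Mat d) : ℝ := (1 / 2) * matInner A (tApp T A)

/-- A symmetric (`𝕋_{ijkl} = 𝕋_{klij}`) positive semidefinite 4-tensor. -/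
structure IsGoodTens (T : Tens d) : Prop where
  symm : ∀ i j k l, T i j k l = T k l i j
  psd : ∀ A : Mat d, 0 ≤ matInner A (tApp T A)

/-- `SL(d)`: matrices of determinant one.-/
def SLg (d : ℕ) : Set (Mat d) := {P | P.det = 1}

/-- `SO(d)`: rotations. -/
def SOg (d : ℕ) : Set (Mat d) := {R | R.det = 1 ∧ Rᵀ * R = 1 ∧ R * Rᵀ = 1}

/-- `GL₊(d)`: matrices of positive determinant. -/
def GLp (d : ℕ) : Set (Mat d) := {F | 0 < F.det}

/-- Deviatoric (symmetric and trace-free) matrices. -/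
def Dev (d : ℕ) : Set (Mat d) := {A | Aᵀ = A ∧ A.trace = 0}

/-- Symmetric part of a matrix. -/
def msym (A : Mat d) : Mat d := (2⁻¹ : ℝ) • (A + Aᵀ)

/-- Matrix exponential. -/
def mexp (A : Mat d) : Mat d := NormedSpace.exp A

/-- The dissipation-potential assumptions: `R^dev` is nonnegative, convex, positively
1-homogeneous and comparable to the norm on the deviatoric matrices. -/
structure DissAss (d : ℕ) (Rdev : Mat d → ℝ) (c₄ c₅ : ℝ) : Prop where
  c4pos : 0 < c₄
  c5pos : 0 < c₅
  nonneg : ∀ P ∈ Dev d, 0 ≤ Rdev P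
  convexOn : ConvexOn ℝ (Dev d) Rdev
  hom : ∀ a : ℝ, 0 ≤ a → ∀ P ∈ Dev d, Rdev (a • P) = a * Rdev P
  lb : ∀ P ∈ Dev d, c₄ * ‖P‖ ≤ Rdev P
  ub : ∀ P ∈ Dev d, Rdev P ≤ c₅ * ‖P‖

-- The extended dissipation potential `R`, equal to `R^dev` on deviatoric matrices and
-- `∞` otherwise (with values in `[0,∞]`).
open scoped Classical in
def Rext (Rdev : Mat d → ℝ) (P : Mat d) : ℝ≥0∞ :=
  if P ∈ Dev d then ENNReal.ofReal (Rdev P) else ⊤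

/-- The dissipation distance `D(I,P̂)`: infimum of `∫₀¹ R(Ṗ P⁻¹) dt` over `C¹` paths
from `I` to `P̂`. -/
def DistI (Rdev : Mat d → ℝ) (Phat : Mat d) : ℝ≥0∞ :=
  ⨅ (P : ℝ → Mat d) (_ : ContDiff ℝ 1 P) (_ : P 0 = 1) (_ : P 1 = Phat),
    ∫⁻ t in Set.Icc (0 : ℝ) 1, Rext Rdev (deriv P t * (P t)⁻¹)

/-- The dissipation distance `D(P,P̂) = D(I, P̂ P⁻¹)` (equal to `∞` if `P` is not
invertible, since then `P⁻¹ = 0` and no admissible finite-cost path exists). -/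
def DistD (Rdev : Mat d → ℝ) (P Phat : Mat d) : ℝ≥0∞ := DistI Rdev (Phat * P⁻¹)

/-- The gradient `∇u(x)` of a vector field, as a matrix: `(∇u)_{ij} = ∂_j u_i`. -/
def grad (u : E d → E d) (x : E d) : Mat d :=
  Matrix.of fun i j => fderiv ℝ u x (EuclideanSpace.single j 1) i

/-- Membership in `H¹(Ω;ℝ^d)`: differentiable on `Ω`, with the function and its gradient
square integrable on `Ω`. -/
structure MemH1 (Ω : Set (E d)) (u : E d → E d) : Prop where
  diff : ∀ x ∈ Ω, DifferentiableAt ℝ u x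
  l2 : MemLp u 2 (volume.restrict Ω)
  gradl2 : MemLp (grad u) 2 (volume.restrict Ω)

/-- The space `U = {u ∈ H¹(Ω;ℝ^d) : u = 0 on Γ}`. -/
def memU (Ω Γ : Set (E d)) (u : E d → E d) : Prop :=
  MemH1 Ω u ∧ ∀ x ∈ Γ, u x = 0

/-- The space `Z = L²(Ω;ℝ^{d×d})`. -/
def memZ (Ω : Set (E d)) (z : E d → Mat d) : Prop :=
  MemLp z 2 (volume.restrict Ω)

/-- Membership in the state space `Q = U × Z`. -/
def memQ (Ω Γ : Set (E d)) (u : E d → E d) (z : E d → Mat d) : Prop :=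
  memU Ω Γ u ∧ memZ Ω z

/-- Weak convergence in `L²(Ω;ℝ^{d×d})`. -/
def WeakL2Mat (Ω : Set (E d)) (z : ℕ → E d → Mat d) (z₀ : E d → Mat d) : Prop :=
  ∀ g : E d → Mat d, MemLp g 2 (volume.restrict Ω) →
    Tendsto (fun n => ∫ x in Ω, matInner (z n x) (g x)) atTop
      (𝓝 (∫ x in Ω, matInner (z₀ x) (g x)))

/-- Weak convergence in `L²(Ω;ℝ^d)`. -/
def WeakL2Vec (Ω : Set (E d)) (u : ℕ → E d → E d) (u₀ : E d → E d) : Prop :=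
  ∀ g : E d → E d, MemLp g 2 (volume.restrict Ω) →
    Tendsto (fun n => ∫ x in Ω, ⟪u n x, g x⟫) atTop (𝓝 (∫ x in Ω, ⟪u₀ x, g x⟫))

/-- Weak convergence in `H¹(Ω;ℝ^d)`. -/
def WeakH1 (Ω : Set (E d)) (u : ℕ → E d → E d) (u₀ : E d → E d) : Prop :=
  WeakL2Vec Ω u u₀ ∧ WeakL2Mat Ω (fun n => grad (u n)) (grad u₀)

/-- Weak convergence in `Q = U × Z`. -/
def WeakQ (Ω : Set (E d)) (u : ℕ → E d → E d) (z : ℕ → E d → Mat d)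
    (u₀ : E d → E d) (z₀ : E d → Mat d) : Prop :=
  WeakH1 Ω u u₀ ∧ WeakL2Mat Ω z z₀

/-- A bounded open connected set with Lipschitz boundary: near every boundary point,
after choosing a unit direction `v`, the set is the open hypograph of a Lipschitz
function over the hyperplane orthogonal to `v`. -/
structure IsLipschitzDomain (Ω : Set (E d)) : Prop where
  open' : IsOpen Ω
  bounded : Bornology.IsBounded Ω
  connected : IsConnected Ω
  lipBoundary : ∀ x ∈ frontier Ω, ∃ r > (0 : ℝ), ∃ v : E d, ‖v‖ = 1 ∧
    ∃ L : ℝ≥0, ∃ φ : E d → ℝ, LipschitzWith L φ ∧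
      ∀ y ∈ Metric.ball x r, (y ∈ Ω ↔ ⟪y, v⟫ < φ (y - ⟪y, v⟫ • v))

/-- The Dirichlet boundary part `Γ`: a relatively open subset of `∂Ω` with positive
`(d-1)`-dimensional Hausdorff measure. -/
structure IsDirichletPart (Ω Γ : Set (E d)) : Prop where
  sub : Γ ⊆ frontier Ω
  relOpen : ∃ V : Set (E d), IsOpen V ∧ Γ = V ∩ frontier Ω
  posMeas : 0 < μH[(d : ℝ) - 1] Γ

/-- The matrix of first derivatives `∂_F W(F)` of a real function of a matrix. -/
def matGrad (W : Mat d → ℝ) (F : Mat d) : Mat d :=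
  Matrix.of fun i j => fderiv ℝ W F (Matrix.single i j 1)

/-- The assumptions on the elastic energy density `W_el : ℝ^{d×d} → [0,∞]`:
finite and `C¹` on `GL₊(d)` and `≡ ∞` outside; frame indifference; nondegeneracy
`W_el(F) ≥ c₁ dist²(F,SO(d))`; control of the Mandel tensor `Fᵀ ∂_F W_el(F)`;
and quadratic expansion `|·|²_ℂ` around the identity. -/
structure ElAss (d : ℕ) (Wel : Mat d → ℝ≥0∞) (c₁ c₂ c₃ : ℝ) (Cten : Tens d) : Prop where
  c1pos : 0 < c₁
  c2pos : 0 < c₂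
  finiteOn : ∀ F ∈ GLp d, Wel F ≠ ⊤
  eqTopOff : ∀ F ∉ GLp d, Wel F = ⊤
  smooth : ContDiffOn ℝ 1 (fun F => (Wel F).toReal) (GLp d)
  frame : ∀ R ∈ SOg d, ∀ F ∈ GLp d, Wel (R * F) = Wel F
  lowerBound : ∀ F ∈ GLp d,
    ENNReal.ofReal (c₁ * (Metric.infDist F (SOg d)) ^ 2) ≤ Wel F
  mandel : ∀ F ∈ GLp d,
    ‖Fᵀ * matGrad (fun G => (Wel G).toReal) F‖ ≤ c₂ * ((Wel F).toReal + c₃)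
  tens : IsGoodTens Cten
  quadExp : ∀ δ > (0 : ℝ), ∃ cδ > (0 : ℝ), ∀ A : Mat d, ‖A‖ < cδ →
    Wel (1 + A) ≠ ⊤ ∧ |(Wel (1 + A)).toReal - qForm Cten A| ≤ δ * qForm Cten A

/-- The assumptions on the hardening energy density `W_h`: it coincides with a
locally Lipschitz, quadratically expandable `W̃_h` on a compact `K ⊆ SL(d)` containing
a relative neighborhood of `I`, is `≡ ∞` outside `K`, and is coercive. -/
structure HardAss (d : ℕ) (Wh : Mat d → ℝ≥0∞) (Wth : Mat d → ℝ) (K : Set (Mat d))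
    (c₃ : ℝ) (Hten : Tens d) : Prop where
  c3pos : 0 < c₃
  eqOn : ∀ P ∈ K, Wh P = ENNReal.ofReal (Wth P)
  eqTopOff : ∀ P ∉ K, Wh P = ⊤
  nonneg : ∀ P ∈ K, 0 ≤ Wth P
  compact : IsCompact K
  subSL : K ⊆ SLg d
  nbhdI : ∃ ρ > (0 : ℝ), {P ∈ SLg d | ‖P - 1‖ < ρ} ⊆ K
  locLip : LocallyLipschitz Wth
  tens : IsGoodTens Hten
  quadExp : ∀ δ > (0 : ℝ), ∃ cδ > (0 : ℝ), ∀ A : Mat d, ‖A‖ < cδ →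
    |Wth (1 + A) - qForm Hten A| ≤ δ * qForm Hten A
  coercive : ∀ A : Mat d, ENNReal.ofReal (c₃ * ‖A‖ ^ 2) ≤ Wh (1 + A)

/-- The rescaled finite-plasticity stored energy
`W_ε(u,z) = ε⁻² ∫_Ω W_el((I+ε∇u)(I+εz)⁻¹) dx + ε⁻² ∫_Ω W_h(I+εz) dx`. -/
def Weps (Ω : Set (E d)) (Wel Wh : Mat d → ℝ≥0∞) (ε : ℝ)
    (u : E d → E d) (z : E d → Mat d) : ℝ≥0∞ :=
  ENNReal.ofReal (ε⁻¹) ^ 2 *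
    ((∫⁻ x in Ω, Wel ((1 + ε • grad u x) * (1 + ε • z x)⁻¹)) +
      ∫⁻ x in Ω, Wh (1 + ε • z x))

/-- The linearized stored energy `W₀(u,z) = ∫_Ω |∇u^sym − z^sym|²_ℂ + ∫_Ω |z|²_ℍ`. -/
def W0 (Ω : Set (E d)) (Cten Hten : Tens d)
    (u : E d → E d) (z : E d → Mat d) : ℝ≥0∞ :=
  (∫⁻ x in Ω, ENNReal.ofReal (qForm Cten (msym (grad u x) - msym (z x)))) +
    ∫⁻ x in Ω, ENNReal.ofReal (qForm Hten (z x))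

/-- A generalized loading `ℓ ∈ W^{1,1}(0,T;U')`, described by its values and its time
derivative `ℓ'`: both are linear in `u`, `ℓ` is the integral of `ℓ'`, and `ℓ(t)`, `ℓ'(t)`
are bounded by `g(t)` times the `H¹(Ω)`-norm, with `g ∈ L¹(0,T)`. -/
structure Loading (Ω : Set (E d)) (T : ℝ) (ℓ ℓ' : ℝ → (E d → E d) → ℝ) : Prop where
  lin : ∀ t ∈ Icc (0 : ℝ) T, IsLinearMap ℝ (ℓ t) ∧ IsLinearMap ℝ (ℓ' t)
  fund : ∀ u : E d → E d, ∀ t ∈ Icc (0 : ℝ) T,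
    (IntervalIntegrable (fun s => ℓ' s u) volume 0 t) ∧
    ℓ t u = ℓ 0 u + ∫ s in (0 : ℝ)..t, ℓ' s u
  bound : ∃ g : ℝ → ℝ, IntegrableOn g (Icc (0 : ℝ) T) ∧
    ∀ t ∈ Icc (0 : ℝ) T, ∀ u : E d → E d,
      |ℓ t u| ≤ g t * Real.sqrt ((∫ x in Ω, ‖u x‖ ^ 2) + ∫ x in Ω, ‖grad u x‖ ^ 2) ∧
      |ℓ' t u| ≤ g t * Real.sqrt ((∫ x in Ω, ‖u x‖ ^ 2) + ∫ x in Ω, ‖grad u x‖ ^ 2)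

/-- Total energy `E_ε(t,u,z) = W_ε(u,z) − ⟨ℓ(t),u⟩`, with values in `(-∞,∞]`. -/
def Eeps (Ω : Set (E d)) (Wel Wh : Mat d → ℝ≥0∞) (ℓ : ℝ → (E d → E d) → ℝ)
    (ε t : ℝ) (u : E d → E d) (z : E d → Mat d) : EReal :=
  (Weps Ω Wel Wh ε u z : EReal) - ((ℓ t u : ℝ) : EReal)

/-- Linearized total energy `E₀(t,u,z) = W₀(u,z) − ⟨ℓ(t),u⟩`. -/
def E0 (Ω : Set (E d)) (Cten Hten : Tens d)
    (ℓ : ℝ → (E d → E d) → ℝ) (t : ℝ) (u : E d → E d) (z : E d → Mat d) : EReal :=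
  (W0 Ω Cten Hten u z : EReal) - ((ℓ t u : ℝ) : EReal)

/-- The rescaled dissipation functional `𝒟_ε(z₁,z₂) = ε⁻¹ ∫_Ω D(I+εz₁, I+εz₂) dx`. -/
def Deps (Ω : Set (E d)) (Rdev : Mat d → ℝ) (ε : ℝ)
    (z₁ z₂ : E d → Mat d) : ℝ≥0∞ :=
  ENNReal.ofReal (ε⁻¹) * ∫⁻ x in Ω, DistD Rdev (1 + ε • z₁ x) (1 + ε • z₂ x)

/-- The linearized dissipation functional `𝒟₀(z₁,z₂) = ∫_Ω R(z₂ − z₁) dx`. -/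
def D0 (Ω : Set (E d)) (Rdev : Mat d → ℝ) (z₁ z₂ : E d → Mat d) : ℝ≥0∞ :=
  ∫⁻ x in Ω, Rext Rdev (z₂ x - z₁ x)

/-- The total dissipation `Diss_𝒟(z;[0,t])`: supremum over all partitions
`0 = τ₀ ≤ … ≤ τ_N = t` of `∑ 𝒟(z(τ_{i-1}), z(τ_i))`. -/
def DissOn (Dd : (E d → Mat d) → (E d → Mat d) → ℝ≥0∞)
    (z : ℝ → E d → Mat d) (t : ℝ) : ℝ≥0∞ :=
  ⨆ (N : ℕ) (τ : Fin (N + 1) → ℝ) (_ : Monotone τ) (_ : τ 0 = 0)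
    (_ : τ (Fin.last N) = t),
      ∑ i : Fin N, Dd (z (τ i.castSucc)) (z (τ i.succ))

/-- Stability of a state `(u,z)` at a given time for the energy `Ee` and dissipation `Dd`. -/
def Stable (Qmem : (E d → E d) → (E d → Mat d) → Prop)
    (Ee : (E d → E d) → (E d → Mat d) → EReal)
    (Dd : (E d → Mat d) → (E d → Mat d) → ℝ≥0∞)
    (u : E d → E d) (z : E d → Mat d) : Prop :=
  Ee u z < ⊤ ∧ ∀ uh zh, Qmem uh zh → Ee u z ≤ Ee uh zh + (Dd z zh : EReal)

/-- An energetic solution on `[0,T]` of the rate-independent system given by the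
(time-dependent) energy `Ee`, dissipation `Dd`, power `ℓ'` and initial datum `(u0,z0)`:
global stability and energy balance hold at every time. -/
structure IsEnergeticSol (Qmem : (E d → E d) → (E d → Mat d) → Prop) (T : ℝ)
    (Ee : ℝ → (E d → E d) → (E d → Mat d) → EReal)
    (Dd : (E d → Mat d) → (E d → Mat d) → ℝ≥0∞)
    (ℓ' : ℝ → (E d → E d) → ℝ) (u0 : E d → E d) (z0 : E d → Mat d)
    (u : ℝ → E d → E d) (z : ℝ → E d → Mat d) : Prop where
  init_u : u 0 = u0
  init_z : z 0 = z0
  mem : ∀ t ∈ Icc (0 : ℝ) T, Qmem (u t) (z t)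
  power_int : IntegrableOn (fun s => ℓ' s (u s)) (Icc (0 : ℝ) T)
  stable : ∀ t ∈ Icc (0 : ℝ) T, Stable Qmem (Ee t) Dd (u t) (z t)
  balance : ∀ t ∈ Icc (0 : ℝ) T,
    Ee t (u t) (z t) + (DissOn Dd z t : EReal)
      = Ee 0 u0 z0 - ((∫ s in (0 : ℝ)..t, ℓ' s (u s) : ℝ) : EReal)

/-!
A path `P` from `I` of cost `r` has plastic rate `ξ = Ṗ P⁻¹` with `c₄ ∫ |ξ| ≤ r`. Invertibility
of `P` is not automatic (`P⁻¹ = 0` where `P` is singular, and there the cost integrand vanishes),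
but `Ṗ = ξ P` wherever `P` is invertible, so a continuity argument keeps `P` within `3r/(2c₄)`
of `I`, hence invertible, on all of `[0,1]`.
Finite cost forces `ξ` to be deviatoric, so `A = ∫ ξ` is deviatoric with `R(A) ≤ r` by Jensen,
and `P(1) - I - A = ∫ ξ (P - I)` is `O(r²)`. With `r = ε b` and
`ε⁻¹ ((I + εẑ_ε)(I + εz_ε)⁻¹ - I) = (ẑ_ε - z_ε)(I + εz_ε)⁻¹ → ẑ - z`, rescaling by `ε⁻¹` puts
`ẑ - z` in the closure of the sublevel set `{R ≤ b}` whenever `ε⁻¹ D_ε < b` infinitely often;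
that sublevel set is closed because `R^dev` is Lipschitz on the deviatoric matrices.
-/

theorem integral_le_of_ofReal_le_lintegral {α : Type*} [MeasurableSpace α] {μ : Measure α}
    {g : α → ℝ} {F : α → ℝ≥0∞} {r : ℝ} (hr : 0 ≤ r) (hg : Integrable g μ) (hg0 : 0 ≤ᵐ[μ] g)
    (hgF : ∀ᵐ x ∂μ, ENNReal.ofReal (g x) ≤ F x) (hF : ∫⁻ x, F x ∂μ ≤ ENNReal.ofReal r) :
    ∫ x, g x ∂μ ≤ r := by
  rw [← ENNReal.ofReal_le_ofReal_iff hr, ofReal_integral_eq_lintegral_ofReal hg hg0]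
  exact (lintegral_mono_ae hgF).trans hF

theorem forall_lt_of_bootstrap {f : ℝ → ℝ} {a b c : ℝ} (hf : ContinuousOn f (Icc a b))
    (ha : f a < c) (step : ∀ t ∈ Icc a b, (∀ s ∈ Icc a t, f s ≤ c) → f t < c) :
    ∀ t ∈ Icc a b, f t < c := by
  by_contra! hbad
  set B := {t ∈ Icc a b | c ≤ f t}
  have hB : IsClosed B := hf.preimage_isClosed_of_isClosed isClosed_Icc isClosed_Ici
  have hBbdd : BddBelow B := ⟨a, fun t ht => ht.1.1⟩
  obtain ⟨τ, hτ⟩ := hbad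
  have hτB : sInf B ∈ B := hB.csInf_mem ⟨τ, hτ⟩ hBbdd
  have haτ : a < sInf B := hτB.1.1.lt_of_ne fun h => (h ▸ ha).not_ge hτB.2
  have hbefore : ∀ s ∈ Ico a (sInf B), f s ≤ c := fun s hs =>
    not_lt.1 fun hcs => hs.2.not_ge (csInf_le hBbdd ⟨⟨hs.1, hs.2.le.trans hτB.1.2⟩, hcs.le⟩)
  have hupto : ∀ s ∈ Icc a (sInf B), f s ≤ c := fun s hs => by
    have hfs : ContinuousWithinAt f (Ico a (sInf B)) s :=
      (hf s ⟨hs.1, hs.2.trans hτB.1.2⟩).mono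
        (Ico_subset_Icc_self.trans (Icc_subset_Icc_right hτB.1.2))
    exact hfs.closure_le (by rwa [closure_Ico haτ.ne]) continuousWithinAt_const hbefore
  exact (step _ hτB.1 hupto).not_ge hτB.2

theorem isUnit_of_norm_sub_one_lt_one {R : Type*} [NormedRing R] [HasSummableGeomSeries R] {x : R}
    (h : ‖x - 1‖ < 1) : IsUnit x := by
  simpa using isUnit_one_sub_of_norm_lt_one (x := 1 - x) (by rwa [norm_sub_rev])

theorem setIntegral_Icc_deriv_eq_sub {E : Type*} [NormedAddCommGroup E] [NormedSpace ℝ E]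
    [CompleteSpace E] {f : ℝ → E} (hf : ContDiff ℝ 1 f) {a b : ℝ} (hab : a ≤ b) :
    ∫ s in Icc a b, deriv f s = f b - f a := by
  rw [integral_Icc_eq_integral_Ioc, ← intervalIntegral.integral_of_le hab]
  exact intervalIntegral.integral_deriv_eq_sub
    (fun x _ => (hf.differentiable one_ne_zero).differentiableAt)
    ((hf.continuous_deriv le_rfl).intervalIntegrable a b)

section

attribute [local instance] Matrix.frobeniusNormedRing

variable {Rdev : Mat d → ℝ} {c₄ c₅ : ℝ}

def devSubmodule (d : ℕ) : Submodule ℝ (Mat d) where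
  carrier := Dev d
  add_mem' {A B} hA hB :=
    ⟨by rw [transpose_add, hA.1, hB.1], by rw [trace_add, hA.2, hB.2, add_zero]⟩
  zero_mem' := ⟨transpose_zero, trace_zero _ _⟩
  smul_mem' c A hA := ⟨by rw [transpose_smul, hA.1], by rw [trace_smul, hA.2, smul_zero]⟩

theorem isClosed_dev : IsClosed (Dev d) :=
  (devSubmodule d).closed_of_finiteDimensional

theorem DissAss.map_add_le (hR : DissAss d Rdev c₄ c₅) {A B : Mat d} (hA : A ∈ Dev d)
    (hB : B ∈ Dev d) : Rdev (A + B) ≤ Rdev A + Rdev B := by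
  have hmid := hR.convexOn.2 hA hB (by norm_num : (0 : ℝ) ≤ 1 / 2) (by norm_num : (0 : ℝ) ≤ 1 / 2)
    (by norm_num)
  rw [← smul_add, hR.hom _ (by norm_num) _ ((devSubmodule d).add_mem hA hB)] at hmid
  simp only [smul_eq_mul] at hmid
  linarith

theorem DissAss.le_add_norm_sub (hR : DissAss d Rdev c₄ c₅) {A B : Mat d} (hA : A ∈ Dev d)
    (hB : B ∈ Dev d) : Rdev A ≤ Rdev B + c₅ * ‖A - B‖ := by
  have hAB : A - B ∈ Dev d := (devSubmodule d).sub_mem hA hB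
  calc Rdev A = Rdev (B + (A - B)) := by rw [add_sub_cancel]
    _ ≤ Rdev B + Rdev (A - B) := hR.map_add_le hB hAB
    _ ≤ Rdev B + c₅ * ‖A - B‖ := by gcongr; exact hR.ub _ hAB

theorem DissAss.continuousOn (hR : DissAss d Rdev c₄ c₅) : ContinuousOn Rdev (Dev d) := by
  refine (LipschitzOnWith.of_dist_le_mul (K := c₅.toNNReal) fun A hA B hB => ?_).continuousOn
  rw [Real.dist_eq, dist_eq_norm, Real.coe_toNNReal _ hR.c5pos.le, abs_sub_le_iff]
  constructor
  · linarith [hR.le_add_norm_sub hA hB]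
  · linarith [norm_sub_rev A B ▸ hR.le_add_norm_sub hB hA]

theorem DissAss.isClosed_sublevel (hR : DissAss d Rdev c₄ c₅) (b : ℝ) :
    IsClosed {A | A ∈ Dev d ∧ Rdev A ≤ b} :=
  hR.continuousOn.preimage_isClosed_of_isClosed isClosed_dev isClosed_Iic

theorem rext_of_mem {A : Mat d} (hA : A ∈ Dev d) : Rext Rdev A = ENNReal.ofReal (Rdev A) :=
  if_pos hA

theorem rext_of_notMem {A : Mat d} (hA : A ∉ Dev d) : Rext Rdev A = ⊤ :=
  if_neg hA

theorem DissAss.ofReal_mul_norm_le_rext (hR : DissAss d Rdev c₄ c₅) (A : Mat d) :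
    ENNReal.ofReal (c₄ * ‖A‖) ≤ Rext Rdev A := by
  by_cases hA : A ∈ Dev d
  · rw [rext_of_mem hA]; exact ENNReal.ofReal_le_ofReal (hR.lb A hA)
  · rw [rext_of_notMem hA]; exact le_top

theorem mapsTo_dev_of_setLIntegral_rext_ne_top {f : ℝ → Mat d} {a b : ℝ} (hab : a ≠ b)
    (hf : ContinuousOn f (Icc a b)) (hfin : ∫⁻ t in Icc a b, Rext Rdev (f t) ≠ ⊤) :
    MapsTo f (Icc a b) (Dev d) := by
  set N := Ioo a b ∩ f ⁻¹' (Dev d)ᶜ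
  have hN : IsOpen N := (hf.mono Ioo_subset_Icc_self).isOpen_inter_preimage isOpen_Ioo
    isClosed_dev.isOpen_compl
  have hN_empty : N = ∅ := by
    by_contra hne
    refine hfin (eq_top_iff.2 ?_)
    calc ⊤ = ∫⁻ _ in N, ⊤ := by
          rw [setLIntegral_const, ENNReal.top_mul (hN.measure_ne_zero _
            (nonempty_iff_ne_empty.2 hne))]
      _ = ∫⁻ t in N, Rext Rdev (f t) :=
          setLIntegral_congr_fun hN.measurableSet fun t ht => (rext_of_notMem ht.2).symm
      _ ≤ ∫⁻ t in Icc a b, Rext Rdev (f t) :=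
          lintegral_mono_set (inter_subset_left.trans Ioo_subset_Icc_self)
  have hIoo : MapsTo f (Ioo a b) (Dev d) := fun t ht => by
    by_contra hft
    exact hN_empty.subset ⟨ht, hft⟩
  simpa only [closure_Ioo hab, isClosed_dev.closure_eq] using
    hIoo.closure_of_continuousOn (by rwa [closure_Ioo hab])

section PlasticRate

def plasticRate (P : ℝ → Mat d) (t : ℝ) : Mat d := deriv P t * (P t)⁻¹

variable {P : ℝ → Mat d}

theorem norm_deriv_sub_plasticRate_le {t : ℝ} (ht : IsUnit (P t)) :
    ‖deriv P t - plasticRate P t‖ ≤ ‖plasticRate P t‖ * ‖P t - 1‖ := by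
  have hrate : deriv P t - plasticRate P t = plasticRate P t * (P t - 1) := by
    rw [mul_sub, mul_one, plasticRate,
      nonsing_inv_mul_cancel_right _ _ ((isUnit_iff_isUnit_det _).1 ht)]
  exact (congrArg norm hrate).trans_le (norm_mul_le _ _)

theorem continuousOn_plasticRate (hP : ContDiff ℝ 1 P) {s : Set ℝ}
    (hs : ∀ t ∈ s, IsUnit (P t)) : ContinuousOn (plasticRate P) s := by
  refine (hP.continuous_deriv le_rfl).continuousOn.mul fun t ht => ?_
  simp_rw [nonsing_inv_eq_ringInverse]
  have hinv := NormedRing.inverse_continuousAt (hs t ht).unit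
  rw [IsUnit.unit_spec] at hinv
  exact hinv.comp_continuousWithinAt hP.continuous.continuousWithinAt

theorem norm_integral_plasticRate_sub_le (hP : ContDiff ℝ 1 P) {a b δ : ℝ} (hab : a ≤ b)
    (hnear : ∀ t ∈ Icc a b, IsUnit (P t) ∧ ‖P t - 1‖ ≤ δ) :
    ‖(∫ t in Icc a b, plasticRate P t) - (P b - P a)‖ ≤ δ * ∫ t in Icc a b, ‖plasticRate P t‖ := by
  have hξ := continuousOn_plasticRate hP fun t ht => (hnear t ht).1
  have hP' := (hP.continuous_deriv le_rfl).continuousOn (s := Icc a b)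
  rw [← setIntegral_Icc_deriv_eq_sub hP hab, norm_sub_rev,
    ← integral_sub (hP'.integrableOn_Icc) hξ.integrableOn_Icc, ← integral_const_mul]
  refine (norm_integral_le_integral_norm _).trans (setIntegral_mono_on
    (hP'.sub hξ).norm.integrableOn_Icc (hξ.norm.integrableOn_Icc.const_mul δ) measurableSet_Icc
    fun t ht => ?_)
  exact (norm_deriv_sub_plasticRate_le (hnear t ht).1).trans
    (by rw [mul_comm δ]; gcongr; exact (hnear t ht).2)

theorem DissAss.integral_norm_plasticRate_le (hR : DissAss d Rdev c₄ c₅) (hP : ContDiff ℝ 1 P)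
    {a b r : ℝ} (hunit : ∀ t ∈ Icc a b, IsUnit (P t)) (hr : 0 ≤ r)
    (hcost : ∫⁻ t in Icc a b, Rext Rdev (plasticRate P t) ≤ ENNReal.ofReal r) :
    ∫ t in Icc a b, ‖plasticRate P t‖ ≤ r / c₄ := by
  rw [le_div_iff₀' hR.c4pos, ← integral_const_mul]
  exact integral_le_of_ofReal_le_lintegral hr
    ((continuousOn_plasticRate hP hunit).norm.integrableOn_Icc.const_mul c₄)
    (ae_of_all _ fun t => mul_nonneg hR.c4pos.le (norm_nonneg _))
    (ae_of_all _ fun t => hR.ofReal_mul_norm_le_rext _) hcost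

theorem DissAss.norm_sub_one_le_of_cost_le_of_near (hR : DissAss d Rdev c₄ c₅)
    (hP : ContDiff ℝ 1 P) (hP0 : P 0 = 1) {t r : ℝ} (ht : 0 ≤ t) (hr : 0 ≤ r)
    (hnear : ∀ s ∈ Icc 0 t, ‖P s - 1‖ ≤ 1 / 2)
    (hcost : ∫⁻ s in Icc 0 t, Rext Rdev (plasticRate P s) ≤ ENNReal.ofReal r) :
    ‖P t - 1‖ ≤ 3 / 2 * (r / c₄) := by
  have hunit : ∀ s ∈ Icc 0 t, IsUnit (P s) := fun s hs =>
    isUnit_of_norm_sub_one_lt_one ((hnear s hs).trans_lt (by norm_num))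
  have hξ := continuousOn_plasticRate hP hunit
  have hderiv : ∀ s ∈ Icc 0 t, ‖deriv P s‖ ≤ 3 / 2 * ‖plasticRate P s‖ := fun s hs => by
    have hdiff := norm_deriv_sub_plasticRate_le (hunit s hs)
    have htri := norm_le_norm_add_norm_sub' (deriv P s) (plasticRate P s)
    nlinarith [hnear s hs, norm_nonneg (plasticRate P s)]
  calc ‖P t - 1‖ = ‖∫ s in Icc 0 t, deriv P s‖ :=
        by rw [← hP0]; exact congrArg norm (setIntegral_Icc_deriv_eq_sub hP ht).symm
    _ ≤ ∫ s in Icc 0 t, ‖deriv P s‖ := norm_integral_le_integral_norm _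
    _ ≤ ∫ s in Icc 0 t, 3 / 2 * ‖plasticRate P s‖ :=
      setIntegral_mono_on (hP.continuous_deriv le_rfl).norm.continuousOn.integrableOn_Icc
        (hξ.norm.integrableOn_Icc.const_mul _) measurableSet_Icc hderiv
    _ = 3 / 2 * ∫ s in Icc 0 t, ‖plasticRate P s‖ := integral_const_mul _ _
    _ ≤ 3 / 2 * (r / c₄) := by gcongr; exact hR.integral_norm_plasticRate_le hP hunit hr hcost

theorem DissAss.norm_sub_one_le_of_cost_le (hR : DissAss d Rdev c₄ c₅) (hP : ContDiff ℝ 1 P)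
    (hP0 : P 0 = 1) {r : ℝ} (hr : 0 ≤ r) (hsmall : r / c₄ ≤ 1 / 6)
    (hcost : ∫⁻ t in Icc 0 1, Rext Rdev (plasticRate P t) ≤ ENNReal.ofReal r) :
    ∀ t ∈ Icc (0 : ℝ) 1, ‖P t - 1‖ ≤ 3 / 2 * (r / c₄) := by
  have hstep : ∀ t ∈ Icc (0 : ℝ) 1, (∀ s ∈ Icc 0 t, ‖P s - 1‖ ≤ 1 / 2) →
      ‖P t - 1‖ ≤ 3 / 2 * (r / c₄) := fun t ht hnear =>
    hR.norm_sub_one_le_of_cost_le_of_near hP hP0 ht.1 hr hnear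
      ((lintegral_mono_set (Icc_subset_Icc_right ht.2)).trans hcost)
  have hnear := forall_lt_of_bootstrap (f := fun t => ‖P t - 1‖)
    (hP.continuous.sub continuous_const).norm.continuousOn (by simp [hP0])
    fun t ht hnear => (hstep t ht hnear).trans_lt (by linarith)
  exact fun t ht => hstep t ht fun s hs => (hnear s ⟨hs.1, hs.2.trans ht.2⟩).le

theorem DissAss.exists_dev_near_of_cost_le (hR : DissAss d Rdev c₄ c₅) (hP : ContDiff ℝ 1 P)
    (hP0 : P 0 = 1) {r : ℝ} (hr : 0 ≤ r) (hsmall : r / c₄ ≤ 1 / 6)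
    (hcost : ∫⁻ t in Icc 0 1, Rext Rdev (plasticRate P t) ≤ ENNReal.ofReal r) :
    ∃ A ∈ Dev d, Rdev A ≤ r ∧ ‖A - (P 1 - 1)‖ ≤ 3 / 2 * (r / c₄) ^ 2 := by
  have : IsProbabilityMeasure (volume.restrict (Icc (0 : ℝ) 1)) := ⟨by simp⟩
  have hclose := hR.norm_sub_one_le_of_cost_le hP hP0 hr hsmall hcost
  have hunit : ∀ t ∈ Icc (0 : ℝ) 1, IsUnit (P t) := fun t ht =>
    isUnit_of_norm_sub_one_lt_one ((hclose t ht).trans_lt (by linarith))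
  have hξ := continuousOn_plasticRate hP hunit
  have hmaps : MapsTo (plasticRate P) (Icc 0 1) (Dev d) := mapsTo_dev_of_setLIntegral_rext_ne_top
    zero_ne_one hξ (ne_top_of_le_ne_top ENNReal.ofReal_ne_top hcost)
  have hDev : ∀ᵐ t ∂volume.restrict (Icc (0 : ℝ) 1), plasticRate P t ∈ Dev d :=
    (ae_restrict_mem measurableSet_Icc).mono hmaps
  have hRξ : IntegrableOn (fun t => Rdev (plasticRate P t)) (Icc 0 1) :=
    (hR.continuousOn.comp hξ hmaps).integrableOn_Icc
  refine ⟨∫ t in Icc 0 1, plasticRate P t,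
    hR.convexOn.1.integral_mem isClosed_dev hDev hξ.integrableOn_Icc, ?_, ?_⟩
  · exact (hR.convexOn.map_integral_le hR.continuousOn isClosed_dev hDev hξ.integrableOn_Icc
      hRξ).trans (integral_le_of_ofReal_le_lintegral hr hRξ
        (hDev.mono fun t ht => hR.nonneg _ ht) (hDev.mono fun t ht => (rext_of_mem ht).ge) hcost)
  · calc ‖(∫ t in Icc 0 1, plasticRate P t) - (P 1 - 1)‖
        ≤ 3 / 2 * (r / c₄) * ∫ t in Icc 0 1, ‖plasticRate P t‖ := by
          simpa [hP0] using norm_integral_plasticRate_sub_le hP zero_le_one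
            fun t ht => ⟨hunit t ht, hclose t ht⟩
      _ ≤ 3 / 2 * (r / c₄) * (r / c₄) :=
          mul_le_mul_of_nonneg_left (hR.integral_norm_plasticRate_le hP hunit hr hcost)
            (by have := hR.c4pos; positivity)
      _ = 3 / 2 * (r / c₄) ^ 2 := by ring

end PlasticRate

theorem DissAss.exists_dev_near_of_distI_lt (hR : DissAss d Rdev c₄ c₅) {Q : Mat d} {r : ℝ}
    (hr : 0 ≤ r) (hsmall : r / c₄ ≤ 1 / 6) (hQ : DistI Rdev Q < ENNReal.ofReal r) :
    ∃ A ∈ Dev d, Rdev A ≤ r ∧ ‖A - (Q - 1)‖ ≤ 3 / 2 * (r / c₄) ^ 2 := by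
  simp only [DistI, iInf_lt_iff] at hQ
  obtain ⟨P, hP, hP0, rfl, hcost⟩ := hQ
  exact hR.exists_dev_near_of_cost_le hP hP0 hr hsmall hcost.le

theorem one_add_smul_mul_inv_sub_one {ε : ℝ} {Z Zh : Mat d} (hZ : IsUnit (1 + ε • Z)) :
    (1 + ε • Zh) * (1 + ε • Z)⁻¹ - 1 = ε • ((Zh - Z) * (1 + ε • Z)⁻¹) := by
  have hdet : IsUnit (1 + ε • Z).det := (isUnit_iff_isUnit_det _).1 hZ
  calc (1 + ε • Zh) * (1 + ε • Z)⁻¹ - 1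
        = (1 + ε • Zh) * (1 + ε • Z)⁻¹ - (1 + ε • Z) * (1 + ε • Z)⁻¹ := by
          rw [mul_nonsing_inv _ hdet]
    _ = ε • ((Zh - Z) * (1 + ε • Z)⁻¹) := by
          rw [← sub_mul, add_sub_add_left_eq_sub, ← smul_sub, smul_mul_assoc]

theorem DissAss.exists_dev_near_of_rescaled_distD_lt (hR : DissAss d Rdev c₄ c₅) {ε b : ℝ}
    {Z Zh : Mat d} (hε : 0 < ε) (hb : 0 ≤ b) (hsmall : ε * b / c₄ ≤ 1 / 6)
    (hZ : IsUnit (1 + ε • Z))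
    (hD : ENNReal.ofReal ε⁻¹ * DistD Rdev (1 + ε • Z) (1 + ε • Zh) < ENNReal.ofReal b) :
    ∃ B ∈ Dev d, Rdev B ≤ b ∧ ‖B - (Zh - Z) * (1 + ε • Z)⁻¹‖ ≤ 3 / 2 * ε * (b / c₄) ^ 2 := by
  have hDI : DistI Rdev ((1 + ε • Zh) * (1 + ε • Z)⁻¹) < ENNReal.ofReal (ε * b) := by
    rw [ENNReal.ofReal_inv_of_pos hε, ← ENNReal.div_eq_inv_mul,
      ENNReal.div_lt_iff (Or.inl (by simpa using hε)) (Or.inl ENNReal.ofReal_ne_top)] at hD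
    rwa [ENNReal.ofReal_mul hε.le, mul_comm]
  obtain ⟨A, hA, hRA, hclose⟩ := hR.exists_dev_near_of_distI_lt (mul_nonneg hε.le hb) hsmall hDI
  refine ⟨ε⁻¹ • A, (devSubmodule d).smul_mem _ hA, ?_, ?_⟩
  · rw [hR.hom _ (inv_nonneg.2 hε.le) _ hA, inv_mul_le_iff₀ hε]
    exact hRA
  · rw [one_add_smul_mul_inv_sub_one hZ] at hclose
    have : ε⁻¹ • A - (Zh - Z) * (1 + ε • Z)⁻¹ = ε⁻¹ • (A - ε • ((Zh - Z) * (1 + ε • Z)⁻¹)) := by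
      rw [smul_sub, inv_smul_smul₀ hε.ne']
    rw [this, norm_smul, Real.norm_of_nonneg (inv_nonneg.2 hε.le), inv_mul_le_iff₀ hε]
    calc _ ≤ 3 / 2 * (ε * b / c₄) ^ 2 := hclose
      _ = ε * (3 / 2 * ε * (b / c₄) ^ 2) := by ring

theorem tendsto_sub_mul_inv_one_add_smul {ι : Type*} {l : Filter ι} {ε : ι → ℝ}
    {zs zsh : ι → Mat d} {z zh : Mat d} (hε : Tendsto ε l (𝓝 0)) (hzs : Tendsto zs l (𝓝 z))
    (hzsh : Tendsto zsh l (𝓝 zh)) :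
    Tendsto (fun i => (zsh i - zs i) * (1 + ε i • zs i)⁻¹) l (𝓝 (zh - z)) := by
  have hC : Tendsto (fun i => 1 + ε i • zs i) l (𝓝 1) := by
    simpa using tendsto_const_nhds.add (hε.smul hzs)
  have hinv : Tendsto (fun i => (1 + ε i • zs i)⁻¹) l (𝓝 1) := by
    have h := (NormedRing.inverse_continuousAt (1 : (Mat d)ˣ)).tendsto.comp hC
    rw [Units.val_one, Ring.inverse_one] at h
    simp_rw [nonsing_inv_eq_ringInverse]
    exact h
  simpa using (hzsh.sub hzs).mul hinv

theorem DissAss.rext_sub_le_of_frequently_distD_lt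
    (hR : DissAss d Rdev c₄ c₅) {ι : Type*} {l : Filter ι} {ε : ι → ℝ} {zs zsh : ι → Mat d}
    {z zh : Mat d} {b : ℝ} (hεpos : ∀ i, 0 < ε i) (hε : Tendsto ε l (𝓝 0))
    (hzs : Tendsto zs l (𝓝 z)) (hzsh : Tendsto zsh l (𝓝 zh)) (hb : 0 ≤ b)
    (hfreq : ∃ᶠ i in l,
      ENNReal.ofReal (ε i)⁻¹ * DistD Rdev (1 + ε i • zs i) (1 + ε i • zsh i) < ENNReal.ofReal b) :
    Rext Rdev (zh - z) ≤ ENNReal.ofReal b := by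
  suffices hmem : zh - z ∈ {A | A ∈ Dev d ∧ Rdev A ≤ b} by
    rw [rext_of_mem hmem.1]
    exact ENNReal.ofReal_le_ofReal hmem.2
  refine (hR.isClosed_sublevel b).closure_subset (Metric.mem_closure_iff.2 fun δ hδ => ?_)
  have hunit : ∀ᶠ i in l, IsUnit (1 + ε i • zs i) :=
    (by simpa using tendsto_const_nhds.add (hε.smul hzs) :
      Tendsto (fun i => 1 + ε i • zs i) l (𝓝 1)).eventually (Units.isOpen.mem_nhds isUnit_one)
  have hsmall : ∀ᶠ i in l, ε i * b / c₄ ≤ 1 / 6 :=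
    (by simpa using (hε.mul_const b).div_const c₄ : Tendsto (fun i => ε i * b / c₄) l (𝓝 0))
      |>.eventually (ge_mem_nhds (by norm_num))
  have herr : ∀ᶠ i in l, 3 / 2 * ε i * (b / c₄) ^ 2 < δ / 2 :=
    (by simpa using (hε.const_mul (3 / 2)).mul_const ((b / c₄) ^ 2) :
      Tendsto (fun i => 3 / 2 * ε i * (b / c₄) ^ 2) l (𝓝 0)).eventually (gt_mem_nhds (half_pos hδ))
  have happrox : ∀ᶠ i in l, dist ((zsh i - zs i) * (1 + ε i • zs i)⁻¹) (zh - z) < δ / 2 :=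
    Metric.tendsto_nhds.1 (tendsto_sub_mul_inv_one_add_smul hε hzs hzsh) _ (half_pos hδ)
  obtain ⟨i, hi, hunit, hsmall, herr, happrox⟩ :=
    (hfreq.and_eventually (hunit.and (hsmall.and (herr.and happrox)))).exists
  obtain ⟨B, hB, hRB, hclose⟩ :=
    hR.exists_dev_near_of_rescaled_distD_lt (hεpos i) hb hsmall hunit hi
  refine ⟨B, ⟨hB, hRB⟩, ?_⟩
  calc dist (zh - z) B
      ≤ dist ((zsh i - zs i) * (1 + ε i • zs i)⁻¹) (zh - z) +
          dist ((zsh i - zs i) * (1 + ε i • zs i)⁻¹) B := dist_triangle_left _ _ _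
    _ < δ / 2 + δ / 2 := by
        gcongr
        rw [dist_comm, dist_eq_norm]
        exact hclose.trans_lt herr
    _ = δ := add_halves δ

end

theorem dissipation_distance_Gamma_liminf_general
    {d : ℕ} (Rdev : Mat d → ℝ) (c₄ c₅ : ℝ)
    (hR : DissAss d Rdev c₄ c₅) :
    ∀ z zh : Mat d, ∀ (ε : ℕ → ℝ) (zs zsh : ℕ → Mat d),
      (∀ n, 0 < ε n) → Tendsto ε atTop (𝓝 0) →
      Tendsto zs atTop (𝓝 z) → Tendsto zsh atTop (𝓝 zh) →
      Rext Rdev (zh - z) ≤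
        Filter.liminf (fun n =>
          ENNReal.ofReal ((ε n)⁻¹) *
            DistD Rdev (1 + ε n • zs n) (1 + ε n • zsh n)) atTop := by
  intro z zh ε zs zsh hεpos hε hzs hzsh
  by_contra! hlt
  obtain ⟨b, hb, hliminf, hbR⟩ := ENNReal.lt_iff_exists_real_btwn.mp hlt
  exact hbR.not_ge (hR.rext_sub_le_of_frequently_distD_lt hεpos hε hzs hzsh hb
    (frequently_lt_of_liminf_lt (by isBoundedDefault) hliminf))

/-- **Lemma 3.4, Γ-liminf part (for the rescaled dissipation distance on matrices).**
For every `(z,ẑ)` and every sequence `(z_ε,ẑ_ε) → (z,ẑ)`: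
`D₀(z,ẑ) = R(ẑ−z) ≤ liminf_{ε→0} ε⁻¹ D(I+εz_ε, I+εẑ_ε)`. -/
theorem dissipation_distance_Gamma_liminf
    {d : ℕ} (Rdev : Mat d → ℝ) (c₄ c₅ c₆ : ℝ) (K : Set (Mat d))
    (hR : DissAss d Rdev c₄ c₅)
    (hc₆ : 0 < c₆)
    (hKcomp : IsCompact K) (hKSL : K ⊆ SLg d)
    (hKnbhd : ∃ ρ > (0 : ℝ), {P ∈ SLg d | ‖P - 1‖ < ρ} ⊆ K)
    -- the effective-domain bounds `D(P,Q) ≤ c₆` and `D(I,P) ≤ c₆|P−I|` on `K`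
    (hDbd : ∀ P ∈ K, ∀ Q ∈ K, DistD Rdev P Q ≤ ENNReal.ofReal c₆)
    (hDlin : ∀ P ∈ K, DistI Rdev P ≤ ENNReal.ofReal (c₆ * ‖P - 1‖)) :
    ∀ z zh : Mat d, ∀ (ε : ℕ → ℝ) (zs zsh : ℕ → Mat d),
      (∀ n, 0 < ε n) → Tendsto ε atTop (𝓝 0) →
      Tendsto zs atTop (𝓝 z) → Tendsto zsh atTop (𝓝 zh) →
      Rext Rdev (zh - z) ≤
        Filter.liminf (fun n =>
          ENNReal.ofReal ((ε n)⁻¹) *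
            DistD Rdev (1 + ε n • zs n) (1 + ε n • zsh n)) atTop :=
  dissipation_distance_Gamma_liminf_general Rdev c₄ c₅ hR

end LinPlast
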